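/- arXiv:math/0507062 — 2 statements merged into one kernel-verified Lean document; each statement's English description precedes it below -/
import Mathlib

section
/- Let κ be a set and let X ⊆ [0,1]^κ be a compact subspace such that X equals the closure in [0,1]^κ of X ∩ Σ(κ), and put Σ = Σ(κ) ∩ X. Then any two disjoint subsets A, B ⊆ Σ that are closed in the subspace topology of Σ have disjoint closures in X. (Consequently X is the Čech–Stone compactification of Σ.) -/
open Set Filter Topology

universe u

/-- `Σ(κ)`: the points of the Tikhonov cube `[0,1]^κ` with countable support. -/
def SigmaProd (κ : Type*) : Set (κ → unitInterval) :=
  {x | {t | x t ≠ 0}.Countable}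

/-- Membership in the closure of a set in a product of metric spaces, via
finite sets of coordinates and a uniform `ε`. -/
lemma mem_closure_pi_char {κ : Type u} {A : Set (κ → unitInterval)}
    {y : κ → unitInterval} :
    y ∈ closure A ↔
      ∀ (F : Finset κ) (ε : ℝ), 0 < ε → ∃ a ∈ A, ∀ t ∈ F, dist (a t) (y t) < ε := by
  classical
  have hb : (𝓝 y).HasBasis
      (fun If : Set κ × (κ → ℝ) => If.1.Finite ∧ ∀ i ∈ If.1, 0 < If.2 i)
      (fun If => If.1.pi fun i => Metric.ball (y i) (If.2 i)) := by
    rw [nhds_pi]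
    exact Filter.hasBasis_pi fun i => Metric.nhds_basis_ball
  rw [mem_closure_iff_nhds_basis hb]
  constructor
  · intro h F ε hε
    obtain ⟨a, haA, ha⟩ := h (↑F, fun _ => ε) ⟨F.finite_toSet, fun _ _ => hε⟩
    exact ⟨a, haA, fun t ht => Metric.mem_ball.1 (ha t ht)⟩
  · rintro h ⟨I, ε⟩ ⟨hI, hε⟩
    rcases I.eq_empty_or_nonempty with rfl | hne
    · obtain ⟨a, haA, -⟩ := h ∅ 1 one_pos
      exact ⟨a, haA, by simp⟩
    · have hFne : hI.toFinset.Nonempty := by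
        simpa [Set.Finite.toFinset_nonempty] using hne
      set ε₀ := hI.toFinset.inf' hFne ε with hε₀def
      have hε₀ : 0 < ε₀ := by
        rw [hε₀def, Finset.lt_inf'_iff]
        intro i hi
        exact hε i (hI.mem_toFinset.1 hi)
      obtain ⟨a, haA, ha⟩ := h hI.toFinset ε₀ hε₀
      refine ⟨a, haA, fun i hi => ?_⟩
      have hi' : i ∈ hI.toFinset := hI.mem_toFinset.2 hi
      exact Metric.mem_ball.2 ((ha i hi').trans_le (Finset.inf'_le _ hi'))

/-- The key construction: if `z` lies in the closures of two sets of
countable-support points, then there is a *countable-support* point lying in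
both closures. -/
lemma exists_sigma_point {κ : Type u} {A B : Set (κ → unitInterval)}
    (hA : ∀ a ∈ A, {t | a t ≠ 0}.Countable) (hB : ∀ b ∈ B, {t | b t ≠ 0}.Countable)
    {z : κ → unitInterval} (hzA : z ∈ closure A) (hzB : z ∈ closure B) :
    ∃ y, y ∈ closure A ∧ y ∈ closure B ∧ {t | y t ≠ 0}.Countable := by
  classical
  rw [mem_closure_pi_char] at hzA hzB
  choose α hαA hα using fun (F : Finset κ) (n : ℕ) =>
    hzA F (1 / (n + 1)) (by positivity)
  choose β hβB hβ using fun (F : Finset κ) (n : ℕ) =>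
    hzB F (1 / (n + 1)) (by positivity)
  set Φ : Set κ → Set κ := fun S =>
    S ∪ ⋃ (F : Finset κ) (_ : ↑F ⊆ S) (n : ℕ),
      ({t | α F n t ≠ 0} ∪ {t | β F n t ≠ 0}) with hΦdef
  have hΦsub : ∀ S, S ⊆ Φ S := fun S => subset_union_left
  have hΦc : ∀ S : Set κ, S.Countable → (Φ S).Countable := by
    intro S hS
    refine hS.union ?_
    have hcnt : {F : Finset κ | ↑F ⊆ S}.Countable := by
      have h1 : {t : Set κ | t.Finite ∧ t ⊆ S}.Countable :=
        Set.countable_setOf_finite_subset hS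
      have h2 := (h1.preimage (f := fun F : Finset κ => (↑F : Set κ))
        Finset.coe_injective)
      refine h2.mono fun F hF => ?_
      simp only [Set.mem_preimage, Set.mem_setOf_eq]
      exact ⟨F.finite_toSet, hF⟩
    exact hcnt.biUnion fun F _ =>
      Set.countable_iUnion fun n => (hA _ (hαA F n)).union (hB _ (hβB F n))
  set Sn : ℕ → Set κ := fun n => Φ^[n] ∅ with hSndef
  have hSnsucc : ∀ n, Sn (n + 1) = Φ (Sn n) := fun n =>
    Function.iterate_succ_apply' Φ n ∅
  have hmono : Monotone Sn := monotone_nat_of_le_succ fun n => by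
    rw [hSnsucc n]; exact hΦsub _
  have hSnc : ∀ n, (Sn n).Countable := by
    intro n
    induction n with
    | zero => simp [hSndef]
    | succ n ih => rw [hSnsucc n]; exact hΦc _ ih
  set S : Set κ := ⋃ n, Sn n with hSdef
  have hSc : S.Countable := Set.countable_iUnion hSnc
  -- supports of the chosen approximants with coordinates in `S` stay in `S`
  have hsuppα : ∀ (F : Finset κ) (n m : ℕ), ↑F ⊆ Sn n → {t | α F m t ≠ 0} ⊆ S := by
    intro F n m hF
    have : {t | α F m t ≠ 0} ⊆ Φ (Sn n) := fun t ht =>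
      Set.mem_union_right _ (Set.mem_iUnion.2 ⟨F, Set.mem_iUnion.2 ⟨hF,
        Set.mem_iUnion.2 ⟨m, Set.mem_union_left _ ht⟩⟩⟩)
    rw [← hSnsucc n] at this
    exact this.trans (Set.subset_iUnion Sn (n + 1))
  have hsuppβ : ∀ (F : Finset κ) (n m : ℕ), ↑F ⊆ Sn n → {t | β F m t ≠ 0} ⊆ S := by
    intro F n m hF
    have : {t | β F m t ≠ 0} ⊆ Φ (Sn n) := fun t ht =>
      Set.mem_union_right _ (Set.mem_iUnion.2 ⟨F, Set.mem_iUnion.2 ⟨hF,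
        Set.mem_iUnion.2 ⟨m, Set.mem_union_right _ ht⟩⟩⟩)
    rw [← hSnsucc n] at this
    exact this.trans (Set.subset_iUnion Sn (n + 1))
  set y : κ → unitInterval := fun t => if t ∈ S then z t else 0 with hydef
  have hyc : {t | y t ≠ 0}.Countable := by
    refine hSc.mono fun t ht => ?_
    by_contra hts
    exact ht (by simp [hydef, hts])
  refine ⟨y, ?_, ?_, hyc⟩
  · rw [mem_closure_pi_char]
    intro F ε hε
    set F₁ : Finset κ := F.filter (fun t => t ∈ S) with hF₁def
    have hF₁S : (↑F₁ : Set κ) ⊆ S := by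
      intro t ht
      simp only [hF₁def, Finset.coe_filter, Set.mem_setOf_eq] at ht
      exact ht.2
    obtain ⟨n, hn⟩ := hmono.directed_le.exists_mem_subset_of_finset_subset_biUnion hF₁S
    obtain ⟨m, hm⟩ := exists_nat_one_div_lt hε
    refine ⟨α F₁ m, hαA F₁ m, fun t htF => ?_⟩
    by_cases hts : t ∈ S
    · have ht₁ : t ∈ F₁ := by simp [hF₁def, htF, hts]
      have := hα F₁ m t ht₁
      have hyz : y t = z t := if_pos hts
      rw [hyz]
      exact this.trans hm
    · have h0 : α F₁ m t = 0 := by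
        by_contra h
        exact hts (hsuppα F₁ n m hn h)
      have hy0 : y t = 0 := if_neg hts
      simp [h0, hy0, hε]
  · rw [mem_closure_pi_char]
    intro F ε hε
    set F₁ : Finset κ := F.filter (fun t => t ∈ S) with hF₁def
    have hF₁S : (↑F₁ : Set κ) ⊆ S := by
      intro t ht
      simp only [hF₁def, Finset.coe_filter, Set.mem_setOf_eq] at ht
      exact ht.2
    obtain ⟨n, hn⟩ := hmono.directed_le.exists_mem_subset_of_finset_subset_biUnion hF₁S
    obtain ⟨m, hm⟩ := exists_nat_one_div_lt hε
    refine ⟨β F₁ m, hβB F₁ m, fun t htF => ?_⟩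
    by_cases hts : t ∈ S
    · have ht₁ : t ∈ F₁ := by simp [hF₁def, htF, hts]
      have := hβ F₁ m t ht₁
      have hyz : y t = z t := if_pos hts
      rw [hyz]
      exact this.trans hm
    · have h0 : β F₁ m t = 0 := by
        by_contra h
        exact hts (hsuppβ F₁ n m hn h)
      have hy0 : y t = 0 := if_neg hts
      simp [h0, hy0, hε]

/-- let `X ⊆ [0,1]^κ` be compact with `X = cl (X ∩ Σ(κ))` and let
`Σ = Σ(κ) ∩ X`.  Then any two disjoint relatively closed subsets `A, B` of `Σ`
have disjoint closures in `X` (closure in `X` of `A ⊆ X` being `cl A ∩ X`). -/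
theorem statement5 {κ : Type u} (X : Set (κ → unitInterval)) (hXc : IsCompact X)
    (hX : X = closure (X ∩ SigmaProd κ))
    (A B : Set (κ → unitInterval))
    (hA : A ⊆ SigmaProd κ ∩ X) (hB : B ⊆ SigmaProd κ ∩ X)
    (hAc : closure A ∩ (SigmaProd κ ∩ X) ⊆ A)
    (hBc : closure B ∩ (SigmaProd κ ∩ X) ⊆ B)
    (hAB : Disjoint A B) :
    Disjoint (closure A ∩ X) (closure B ∩ X) := by
  rw [Set.disjoint_left]
  rintro z ⟨hzA, hzX⟩ ⟨hzB, -⟩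
  have hA' : ∀ a ∈ A, {t | a t ≠ 0}.Countable := fun a ha => (hA ha).1
  have hB' : ∀ b ∈ B, {t | b t ≠ 0}.Countable := fun b hb => (hB hb).1
  obtain ⟨y, hyA, hyB, hyc⟩ := exists_sigma_point hA' hB' hzA hzB
  have hXclosed : IsClosed X := hXc.isClosed
  have hyX : y ∈ X := by
    have : closure A ⊆ X := hXclosed.closure_subset_iff.2 fun a ha => (hA ha).2
    exact this hyA
  have hyA' : y ∈ A := hAc ⟨hyA, hyc, hyX⟩
  have hyB' : y ∈ B := hBc ⟨hyB, hyc, hyX⟩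
  exact Set.disjoint_left.1 hAB hyA' hyB'
end

section
/- Let S = (X_α, r^β_α, κ) be a continuous inverse sequence of compact Hausdorff spaces indexed by an ordinal κ such that r^{α+1}_α : X_{α+1} → X_α is a retraction for every α with α+1 < κ. Then S has a right inverse, i.e. there exists a family of continuous maps i^β_α : X_α → X_β (α ≤ β < κ) with i^α_α = id, r^β_α ∘ i^β_α = id_{X_α} and i^γ_β ∘ i^β_α = i^γ_α for α ≤ β ≤ γ. -/
open Set Filter Topology

universe u

/-- A continuous inverse sequence over a well-ordered index set `ι` (representing an
ordinal): continuous surjective bonding maps with identity and composition laws,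
such that at every limit point `δ` of `ι` the map `X δ → Π_{α<δ} X α` is injective. -/
structure IsContInvSeq {ι : Type*} [LinearOrder ι] {X : ι → Type*}
    [∀ α, TopologicalSpace (X α)]
    (r : ∀ ⦃α β : ι⦄, α ≤ β → X β → X α) : Prop where
  continuous : ∀ ⦃α β : ι⦄ (h : α ≤ β), Continuous (r h)
  surjective : ∀ ⦃α β : ι⦄ (h : α ≤ β), Function.Surjective (r h)
  map_id : ∀ (α : ι) (x : X α), r (le_refl α) x = x
  map_comp : ∀ ⦃α β γ : ι⦄ (h₁ : α ≤ β) (h₂ : β ≤ γ) (x : X γ),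
    r h₁ (r h₂ x) = r (h₁.trans h₂) x
  limit_inj : ∀ δ : ι, (∃ α, α < δ) → (∀ α, α < δ → ∃ β, α < β ∧ β < δ) →
    ∀ x y : X δ, (∀ (α : ι) (h : α < δ), r h.le x = r h.le y) → x = y

/-- The limit of an inverse sequence: the space of threads, a subspace of the
product `Π α, X α`. -/
abbrev InvLim {ι : Type*} [LinearOrder ι] {X : ι → Type*}
    [∀ α, TopologicalSpace (X α)]
    (r : ∀ ⦃α β : ι⦄, α ≤ β → X β → X α) : Type _ :=
  {x : ∀ α, X α // ∀ ⦃α β : ι⦄ (h : α ≤ β), r h (x β) = x α}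

/-- A continuous surjection which admits a continuous right inverse. -/
def IsRetraction {X Y : Type*} [TopologicalSpace X] [TopologicalSpace Y]
    (f : X → Y) : Prop :=
  Continuous f ∧ Function.Surjective f ∧ ∃ g : Y → X, Continuous g ∧ f ∘ g = id

/-!
By Zorn's lemma there is a maximal family of rows `i^β_·` satisfying the required identities for
`β` in an initial segment of `ι`. The segment is all of `ι`: otherwise it extends to its least
missing index `β`. If `β = σ + 1`, compose the row at `σ` with a continuous section of `r^β_σ`.
If `β` is a limit, for `x ∈ X α` the points `i^γ_α x` (`α ≤ γ < β`) form a thread, which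
compactness lifts to a point of `X β`; since `X β` embeds into `Π_{γ<β} X γ`, the lift is unique
and depends continuously on `x`.
-/

open Order

section ExtendRow

variable {ι : Type*} [LinearOrder ι] {X : ι → Type*}

/-- The row equal to `f` below the diagonal and to the identity on it. -/
def extendRow {β : ι} (f : ∀ ⦃α⦄, α < β → X α → X β) : ∀ ⦃α⦄, α ≤ β → X α → X β :=
  fun α h x => if hα : α < β then f hα x else cast (congrArg X (h.antisymm (not_lt.1 hα))) x

theorem extendRow_of_lt {α β : ι} (f : ∀ ⦃α⦄, α < β → X α → X β) (h : α < β) :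
    extendRow f h.le = f h :=
  funext fun _ => dif_pos h

theorem extendRow_self {β : ι} (f : ∀ ⦃α⦄, α < β → X α → X β) (h : β ≤ β) :
    extendRow f h = id :=
  funext fun _ => dif_neg (lt_irrefl β)

end ExtendRow

section InverseSequence

variable {ι : Type*} [LinearOrder ι] {X : ι → Type*} [∀ α, TopologicalSpace (X α)]
  {r : ∀ ⦃α β : ι⦄, α ≤ β → X β → X α}

namespace IsContInvSeq

theorem eq_of_isSuccPrelimit (hseq : IsContInvSeq r) {α δ : ι} (hδ : IsSuccPrelimit δ)
    (hαδ : α < δ) {x y : X δ}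
    (hxy : ∀ γ, α ≤ γ → ∀ h : γ < δ, r h.le x = r h.le y) : x = y := by
  refine hseq.limit_inj δ ⟨α, hαδ⟩ (fun γ hγ => (hδ.lt_iff_exists_lt.1 hγ).imp
    fun β ⟨hβδ, hγβ⟩ => ⟨hγβ, hβδ⟩) x y fun γ hγ => ?_
  have hmax : max α γ < δ := max_lt hαδ hγ
  rw [← hseq.map_comp (le_max_right α γ) hmax.le, ← hseq.map_comp (le_max_right α γ) hmax.le,
    hxy _ (le_max_left α γ) hmax]

theorem continuous_of_isSuccPrelimit [∀ γ, T2Space (X γ)] {α δ : ι} [CompactSpace (X δ)]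
    (hseq : IsContInvSeq r) (hδ : IsSuccPrelimit δ) (hαδ : α < δ) {Z : Type*}
    [TopologicalSpace Z] {f : Z → X δ}
    (hf : ∀ γ, α ≤ γ → ∀ h : γ < δ, Continuous fun z => r h.le (f z)) :
    Continuous f := by
  let e : X δ → ∀ γ : Ico α δ, X γ := fun y γ => r γ.2.2.le y
  have he : IsClosedEmbedding e :=
    (continuous_pi fun γ => hseq.continuous _).isClosedEmbedding fun x y hxy =>
      hseq.eq_of_isSuccPrelimit hδ hαδ fun γ h₁ h₂ => congrFun hxy ⟨γ, h₁, h₂⟩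
  exact he.continuous_iff.2 (continuous_pi fun γ => hf γ γ.2.1 γ.2.2)

theorem exists_thread [∀ γ, T1Space (X γ)] {α δ : ι} [CompactSpace (X δ)]
    (hseq : IsContInvSeq r) (hαδ : α < δ)
    (t : ∀ γ, α ≤ γ → γ < δ → X γ)
    (ht : ∀ γ γ' (h₁ : α ≤ γ) (h : γ ≤ γ') (h₂ : γ' < δ),
      r h (t γ' (h₁.trans h) h₂) = t γ h₁ (h.trans_lt h₂)) :
    ∃ y : X δ, ∀ γ (h₁ : α ≤ γ) (h₂ : γ < δ), r h₂.le y = t γ h₁ h₂ := by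
  let C : Ico α δ → Set (X δ) := fun γ => r γ.2.2.le ⁻¹' {t γ γ.2.1 γ.2.2}
  have hC_anti : ∀ γ γ' : Ico α δ, γ.1 ≤ γ'.1 → C γ' ⊆ C γ := by
    intro γ γ' h y hy
    simp only [C, mem_preimage, mem_singleton_iff] at hy ⊢
    rw [← hseq.map_comp h γ'.2.2.le, hy, ht _ _ γ.2.1 h γ'.2.2]
  have hC_dir : Directed (· ⊇ ·) C := fun γ γ' =>
    (le_total γ.1 γ'.1).elim (fun h => ⟨γ', hC_anti _ _ h, subset_rfl⟩)
      fun h => ⟨γ, subset_rfl, hC_anti _ _ h⟩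
  have hC_closed : ∀ γ, IsClosed (C γ) :=
    fun γ => isClosed_singleton.preimage (hseq.continuous _)
  have : Nonempty (Ico α δ) := ⟨⟨α, le_rfl, hαδ⟩⟩
  obtain ⟨y, hy⟩ := IsCompact.nonempty_iInter_of_directed_nonempty_isCompact_isClosed C hC_dir
    (fun γ => hseq.surjective _ _) (fun γ => (hC_closed γ).isCompact) hC_closed
  exact ⟨y, fun γ h₁ h₂ => mem_iInter.1 hy ⟨γ, h₁, h₂⟩⟩

end IsContInvSeq

/-- The conditions on the row `i β` of a right inverse; they involve only the rows at levels
`≤ β`. -/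
structure IsRightInverseAt (r : ∀ ⦃α β : ι⦄, α ≤ β → X β → X α)
    (i : ∀ β ⦃α : ι⦄, α ≤ β → X α → X β) (β : ι) : Prop where
  continuous : ∀ ⦃α⦄ (h : α ≤ β), Continuous (i β h)
  rightInverse : ∀ ⦃α⦄ (h : α ≤ β), Function.RightInverse (i β h) (r h)
  comp : ∀ ⦃α γ⦄ (h₁ : α ≤ γ) (h₂ : γ ≤ β) (x : X α), i β h₂ (i γ h₁ x) = i β (h₁.trans h₂) x

namespace IsRightInverseAt

variable {i j : ∀ β ⦃α : ι⦄, α ≤ β → X α → X β} {β : ι}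

theorem self_apply (hseq : IsContInvSeq r) (hi : IsRightInverseAt r i β) (h : β ≤ β)
    (x : X β) : i β h x = x :=
  (hseq.map_id β _).symm.trans (hi.rightInverse h x)

theorem map_apply {α γ : ι} (hi : IsRightInverseAt r i β) (h₁ : α ≤ γ) (h : γ ≤ β) (x : X α) :
    r h (i β (h₁.trans h) x) = i γ h₁ x := by
  rw [← hi.comp h₁ h, hi.rightInverse]

theorem congr (hi : IsRightInverseAt r i β) (hij : ∀ γ ≤ β, i γ = j γ) :
    IsRightInverseAt r j β := by
  have hβ := hij β le_rfl
  exact ⟨fun α h => hβ ▸ hi.continuous h, fun α h => hβ ▸ hi.rightInverse h,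
    fun α γ h₁ h₂ x => by rw [← hβ, ← hij γ h₂, hi.comp]⟩

end IsRightInverseAt

variable {i : ∀ β ⦃α : ι⦄, α ≤ β → X α → X β} {β : ι}

theorem isRightInverseAt_update_extendRow [DecidableEq ι] (hseq : IsContInvSeq r)
    {f : ∀ ⦃α⦄, α < β → X α → X β} (hcont : ∀ ⦃α⦄ (h : α < β), Continuous (f h))
    (hinv : ∀ ⦃α⦄ (h : α < β), Function.RightInverse (f h) (r h.le))
    (hcomp : ∀ ⦃α γ⦄ (h₁ : α ≤ γ) (h₂ : γ < β) (x : X α),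
      f h₂ (i γ h₁ x) = f (h₁.trans_lt h₂) x) :
    IsRightInverseAt r (Function.update i β (extendRow f)) β := by
  refine ⟨fun α h => ?_, fun α h => ?_, fun α γ h₁ h₂ x => ?_⟩ <;> rw [Function.update_self]
  · obtain h | rfl := h.lt_or_eq
    · exact extendRow_of_lt f h ▸ hcont h
    · exact extendRow_self f h ▸ continuous_id
  · obtain h | rfl := h.lt_or_eq
    · exact extendRow_of_lt f h ▸ hinv h
    · exact extendRow_self f h ▸ hseq.map_id α
  · obtain h₂ | rfl := h₂.lt_or_eq
    · rw [Function.update_of_ne h₂.ne, extendRow_of_lt f h₂, extendRow_of_lt f (h₁.trans_lt h₂),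
        hcomp]
    · rw [Function.update_self, extendRow_self]
      rfl

theorem exists_isRightInverseAt_update_of_covBy [DecidableEq ι] (hseq : IsContInvSeq r)
    {σ : ι} (hσ : σ ⋖ β) (hretr : IsRetraction (r hσ.le)) (hi : IsRightInverseAt r i σ) :
    ∃ f, IsRightInverseAt r (Function.update i β f) β := by
  obtain ⟨-, -, g, hg, hrg⟩ := hretr
  refine ⟨extendRow fun α h x => g (i σ (hσ.le_of_lt h) x),
    isRightInverseAt_update_extendRow hseq (fun α h => hg.comp (hi.continuous _))
      (fun α h x => ?_) fun α γ h₁ h₂ x => by rw [hi.comp]⟩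
  rw [← hseq.map_comp (hσ.le_of_lt h) hσ.le, Function.rightInverse_iff_comp.2 hrg,
    hi.rightInverse]

theorem exists_isRightInverseAt_update_of_isSuccPrelimit [DecidableEq ι]
    [∀ α, CompactSpace (X α)] [∀ α, T2Space (X α)] (hseq : IsContInvSeq r)
    (hβ : IsSuccPrelimit β) (hi : ∀ γ < β, IsRightInverseAt r i γ) :
    ∃ f, IsRightInverseAt r (Function.update i β f) β := by
  have hthread : ∀ α (hα : α < β) (x : X α),
      ∃ y : X β, ∀ γ (h₁ : α ≤ γ) (h₂ : γ < β), r h₂.le y = i γ h₁ x :=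
    fun α hα x => hseq.exists_thread hα (fun γ h₁ _ => i γ h₁ x)
      fun γ γ' h₁ h h₂ => (hi γ' h₂).map_apply h₁ h x
  choose f hf using hthread
  refine ⟨extendRow fun α h => f α h, isRightInverseAt_update_extendRow hseq
    (fun α hα => hseq.continuous_of_isSuccPrelimit hβ hα fun γ h₁ h₂ => ?_)
    (fun α hα x => (hf α hα x α le_rfl hα).trans ((hi α hα).self_apply hseq _ x))
    fun α γ h₁ h₂ x => hseq.eq_of_isSuccPrelimit hβ h₂ fun δ h₃ h₄ => ?_⟩
  · exact ((hi γ h₂).continuous h₁).congr fun x => (hf α hα x γ h₁ h₂).symm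
  · rw [hf _ _ _ δ h₃ h₄, hf _ _ _ δ (h₁.trans h₃) h₄, (hi δ h₄).comp]

theorem exists_isRightInverseAt_update [DecidableEq ι] [∀ α, CompactSpace (X α)]
    [∀ α, T2Space (X α)] (hseq : IsContInvSeq r)
    (hsucc : ∀ ⦃σ β : ι⦄ (h : σ ⋖ β), IsRetraction (r h.le))
    (hi : ∀ γ < β, IsRightInverseAt r i γ) :
    ∃ f, IsRightInverseAt r (Function.update i β f) β := by
  by_cases hβ : IsSuccPrelimit β
  · exact exists_isRightInverseAt_update_of_isSuccPrelimit hseq hβ hi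
  · obtain ⟨σ, hσ⟩ := not_isSuccPrelimit_iff.1 hβ
    exact exists_isRightInverseAt_update_of_covBy hseq hσ (hsucc hσ) (hi σ hσ.lt)

/-- A right inverse defined on the rows with index in the initial segment `dom`; the other rows
are arbitrary. -/
structure PartialRightInverse (r : ∀ ⦃α β : ι⦄, α ≤ β → X β → X α) where
  dom : Set ι
  isLowerSet_dom : IsLowerSet dom
  row : ∀ β ⦃α : ι⦄, α ≤ β → X α → X β
  isRightInverseAt : ∀ β ∈ dom, IsRightInverseAt r row β

namespace PartialRightInverse

instance : Preorder (PartialRightInverse r) where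
  le p q := p.dom ⊆ q.dom ∧ ∀ β ∈ p.dom, p.row β = q.row β
  le_refl p := ⟨subset_rfl, fun _ _ => rfl⟩
  le_trans p q s hpq hqs :=
    ⟨hpq.1.trans hqs.1, fun β hβ => (hpq.2 β hβ).trans (hqs.2 β (hpq.1 hβ))⟩

theorem bddAbove_of_isChain (hseq : IsContInvSeq r) {c : Set (PartialRightInverse r)}
    (hc : IsChain (· ≤ ·) c) : BddAbove c := by
  classical
  let row : ∀ β ⦃α : ι⦄, α ≤ β → X α → X β := fun β α h =>
    if hβ : ∃ p ∈ c, β ∈ p.dom then hβ.choose.row β h else Function.surjInv (hseq.surjective h)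
  have row_eq : ∀ p ∈ c, ∀ β ∈ p.dom, row β = p.row β := by
    intro p hp β hβ
    have hβ' : ∃ p ∈ c, β ∈ p.dom := ⟨p, hp, hβ⟩
    obtain ⟨hq, hβq⟩ := hβ'.choose_spec
    funext α h
    simp only [row, dif_pos hβ']
    obtain hle | hle := hc.total hq hp
    · rw [hle.2 β hβq]
    · rw [hle.2 β hβ]
  refine ⟨⟨{β | ∃ p ∈ c, β ∈ p.dom}, ?_, row, ?_⟩, fun p hp => ⟨fun β hβ => ⟨p, hp, hβ⟩, ?_⟩⟩
  · rintro γ β hβγ ⟨p, hp, hγ⟩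
    exact ⟨p, hp, p.isLowerSet_dom hβγ hγ⟩
  · rintro β ⟨p, hp, hβ⟩
    exact (p.isRightInverseAt β hβ).congr fun γ hγ =>
      (row_eq p hp γ (p.isLowerSet_dom hγ hβ)).symm
  · exact fun β hβ => (row_eq p hp β hβ).symm

theorem exists_gt_of_dom_ne_univ [WellFoundedLT ι] [∀ α, CompactSpace (X α)]
    [∀ α, T2Space (X α)] (hseq : IsContInvSeq r)
    (hsucc : ∀ ⦃σ β : ι⦄ (h : σ ⋖ β), IsRetraction (r h.le)) (p : PartialRightInverse r)
    (hp : p.dom ≠ univ) : ∃ q, p < q := by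
  classical
  obtain ⟨β, hβ, hβ_min⟩ := wellFounded_lt.has_min p.domᶜ (nonempty_compl.2 hp)
  have hlt : ∀ γ < β, γ ∈ p.dom := fun γ hγ => not_not.1 fun h => hβ_min γ h hγ
  obtain ⟨f, hf⟩ := exists_isRightInverseAt_update hseq hsucc fun γ hγ =>
    p.isRightInverseAt γ (hlt γ hγ)
  have hupd : ∀ γ ∈ p.dom, Function.update p.row β f γ = p.row γ :=
    fun γ hγ => Function.update_of_ne (ne_of_mem_of_not_mem hγ hβ) _ _
  refine ⟨⟨insert β p.dom, ?_, Function.update p.row β f, ?_⟩,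
    lt_iff_le_not_ge.2 ⟨⟨subset_insert _ _, fun γ hγ => (hupd γ hγ).symm⟩,
      fun h => hβ (h.1 (mem_insert β _))⟩⟩
  · rintro γ δ hδγ (rfl | hγ)
    · exact hδγ.lt_or_eq.symm.imp_right (hlt δ)
    · exact Or.inr (p.isLowerSet_dom hδγ hγ)
  · rintro γ (rfl | hγ)
    · exact hf
    · exact (p.isRightInverseAt γ hγ).congr fun δ hδ =>
        (hupd δ (p.isLowerSet_dom hδ hγ)).symm

end PartialRightInverse

end InverseSequence

/-- a continuous inverse sequence of compact Hausdorff spaces, indexed by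
an ordinal (here: a well-ordered set `ι`), all of whose successor bonding maps
`r^{α+1}_α` are retractions, admits a right inverse: a family of continuous maps
`i^β_α : X α → X β` with `i^α_α = id`, `r^β_α ∘ i^β_α = id` and `i^γ_β ∘ i^β_α = i^γ_α`. -/
theorem statement6 {ι : Type*} [LinearOrder ι] [WellFoundedLT ι]
    {X : ι → Type u} [∀ α, TopologicalSpace (X α)] [∀ α, CompactSpace (X α)]
    [∀ α, T2Space (X α)]
    (r : ∀ ⦃α β : ι⦄, α ≤ β → X β → X α)
    (hseq : IsContInvSeq r)
    (hsucc : ∀ (α β : ι) (h : α < β), (∀ γ, α < γ → β ≤ γ) → IsRetraction (r h.le)) :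
    ∃ i : ∀ ⦃α β : ι⦄, α ≤ β → X α → X β,
      (∀ ⦃α β : ι⦄ (h : α ≤ β), Continuous (i h)) ∧
      (∀ (α : ι) (x : X α), i (le_refl α) x = x) ∧
      (∀ ⦃α β : ι⦄ (h : α ≤ β) (x : X α), r h (i h x) = x) ∧
      (∀ ⦃α β γ : ι⦄ (h₁ : α ≤ β) (h₂ : β ≤ γ) (x : X α),
        i h₂ (i h₁ x) = i (h₁.trans h₂) x) := by
  obtain ⟨M, hM⟩ := zorn_le fun _ => PartialRightInverse.bddAbove_of_isChain hseq
  have hdom : M.dom = univ := by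
    by_contra hne
    obtain ⟨q, hq⟩ := M.exists_gt_of_dom_ne_univ hseq
      (fun σ β h => hsucc σ β h.lt fun γ hγ => not_lt.1 (h.2 hγ)) hne
    exact hM.not_lt hq
  have hM_row : ∀ β, IsRightInverseAt r M.row β :=
    fun β => M.isRightInverseAt β (hdom ▸ mem_univ β)
  exact ⟨fun α β h => M.row β h, fun α β h => (hM_row β).continuous h,
    fun α x => (hM_row α).self_apply hseq _ x, fun α β h x => (hM_row β).rightInverse h x,
    fun α β γ h₁ h₂ x => (hM_row γ).comp h₁ h₂ x⟩
end
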